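/- arXiv:1209.4656 — 9 statements merged into one kernel-verified Lean document; each statement's English description precedes it below -/
import Mathlib

section
/- Both G₁ and G₂ have multiplicative order 18, i.e., G₁¹⁸ = I and G₂¹⁸ = I, and no smaller positive power of either matrix equals the identity. -/
open Complex Matrix

/-- `t = (√2/2)·e^{2iπ/3}` -/
noncomputable def t : ℂ := ((Real.sqrt 2 : ℂ) / 2) * Complex.exp (2 * (Real.pi : ℂ) * Complex.I / 3)

/-- `G₁ = e^{iπ/9}·diag(2t̄², 2t², −2t̄²)` -/
noncomputable def G₁ : Matrix (Fin 3) (Fin 3) ℂ :=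
  Complex.exp ((Real.pi : ℂ) * Complex.I / 9) •
    Matrix.diagonal ![2 * (starRingEnd ℂ t) ^ 2, 2 * t ^ 2, -(2 * (starRingEnd ℂ t) ^ 2)]

/-- `G₂ = e^{iπ/9}·[[t², t, −t²], [t, 0, t], [−t², t, t²]]` -/
noncomputable def G₂ : Matrix (Fin 3) (Fin 3) ℂ :=
  Complex.exp ((Real.pi : ℂ) * Complex.I / 9) •
    !![t ^ 2, t, -t ^ 2; t, 0, t; -t ^ 2, t, t ^ 2]

noncomputable def zz : ℂ := Complex.exp ((Real.pi : ℂ) * Complex.I / 9)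
noncomputable def uu : ℂ := zz ^ 6
noncomputable def ss : ℂ := (Real.sqrt 2 : ℂ)

lemma hz18 : zz ^ 18 = 1 := by
  have h : ((18:ℕ):ℂ) * ((Real.pi : ℂ) * Complex.I / 9) = 2 * (Real.pi : ℂ) * Complex.I := by
    push_cast; ring
  rw [zz, ← Complex.exp_nat_mul, h, Complex.exp_two_pi_mul_I]

lemma hz9 : zz ^ 9 = -1 := by
  have h : ((9:ℕ):ℂ) * ((Real.pi : ℂ) * Complex.I / 9) = (Real.pi : ℂ) * Complex.I := by
    push_cast; ring
  rw [zz, ← Complex.exp_nat_mul, h, Complex.exp_pi_mul_I]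

lemma hz6ne : zz ^ 6 ≠ 1 := by
  intro h
  rw [zz, ← Complex.exp_nat_mul, Complex.exp_eq_one_iff] at h
  obtain ⟨n, hn⟩ := h
  have hπ : (Real.pi : ℂ) ≠ 0 := by exact_mod_cast Real.pi_ne_zero
  have key : ((1:ℂ) - 3*n) * (2*(Real.pi:ℂ)*Complex.I) = 0 := by
    push_cast at hn; linear_combination 3*hn
  rcases mul_eq_zero.mp key with h1 | h2
  · have h3 : ((3*n : ℤ) : ℂ) = ((1:ℤ) : ℂ) := by push_cast; linear_combination -h1
    have := Int.cast_injective (α := ℂ) h3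
    omega
  · exact (mul_ne_zero (mul_ne_zero two_ne_zero hπ) Complex.I_ne_zero) h2

lemma hzne : zz ≠ 0 := Complex.exp_ne_zero _

lemma hune : uu ≠ 0 := pow_ne_zero _ hzne

lemma hu3 : uu ^ 3 = 1 := by rw [uu, ← pow_mul]; exact hz18

lemma husum : uu ^ 2 + uu + 1 = 0 := by
  have hfac : (uu - 1) * (uu ^ 2 + uu + 1) = 0 := by linear_combination hu3
  rcases mul_eq_zero.mp hfac with h | h
  · exact absurd (by linear_combination h : uu = 1) (by rw [uu]; exact hz6ne)
  · exact h

lemma hs2 : ss ^ 2 = 2 := by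
  rw [ss]
  norm_cast
  exact Real.sq_sqrt (by norm_num)

lemma hu' : uu = Complex.exp (2 * (Real.pi : ℂ) * Complex.I / 3) := by
  rw [uu, zz, ← Complex.exp_nat_mul]
  congr 1
  push_cast; ring

lemma ht : t = ss / 2 * uu := by rw [t, hu', ss]

lemma hconj_u : (starRingEnd ℂ) uu = uu ^ 2 := by
  have h1 : (starRingEnd ℂ) uu * uu = 1 := by
    rw [hu', ← Complex.exp_conj, ← Complex.exp_add]
    have : (starRingEnd ℂ) (2 * (Real.pi : ℂ) * Complex.I / 3) +
        2 * (Real.pi : ℂ) * Complex.I / 3 = 0 := by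
      simp [map_div₀, _root_.map_mul, Complex.conj_I, Complex.conj_ofReal, map_ofNat]
      ring
    rw [this, Complex.exp_zero]
  have h2 : uu ^ 2 * uu = 1 := by rw [← pow_succ]; exact hu3
  have := h1.trans h2.symm
  exact mul_right_cancel₀ hune this

lemma hconj_t : (starRingEnd ℂ) t = ss / 2 * uu ^ 2 := by
  rw [ht, _root_.map_mul, hconj_u, map_div₀, map_ofNat, ss, Complex.conj_ofReal]

lemma h2t2 : 2 * t ^ 2 = uu ^ 2 := by
  rw [ht]; linear_combination (uu^2/2) * hs2

lemma h2c2 : 2 * ((starRingEnd ℂ) t) ^ 2 = uu := by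
  rw [hconj_t]
  linear_combination (uu^4/2) * hs2 + uu * hu3

noncomputable def MM : Matrix (Fin 3) (Fin 3) ℂ := !![t ^ 2, t, -t ^ 2; t, 0, t; -t ^ 2, t, t ^ 2]

noncomputable def NN : Matrix (Fin 3) (Fin 3) ℂ :=
  !![-(1/2 : ℂ), 0, (uu^2 - uu)/2; 0, uu^2, 0; (uu^2 - uu)/2, 0, -(1/2)]

noncomputable def NN2 : Matrix (Fin 3) (Fin 3) ℂ :=
  !![-(1/2 : ℂ), 0, (uu - uu^2)/2; 0, uu, 0; (uu - uu^2)/2, 0, -(1/2)]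

lemma hG1 : G₁ = Matrix.diagonal ![zz^7, zz^13, zz^16] := by
  have e1 : zz * (2 * ((starRingEnd ℂ) t) ^ 2) = zz ^ 7 := by
    rw [h2c2, uu]; ring
  have e2 : zz * (2 * t ^ 2) = zz ^ 13 := by
    rw [h2t2, uu]; ring
  have e3 : zz * -(2 * ((starRingEnd ℂ) t) ^ 2) = zz ^ 16 := by
    rw [h2c2, uu]; linear_combination -zz^7 * hz9
  rw [G₁]
  ext i j
  rw [Matrix.smul_apply]
  fin_cases i <;> fin_cases j <;>
    simp_all [Matrix.diagonal_apply, zz]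

lemma hG2 : G₂ = zz • MM := rfl

lemma hM2 : MM * MM = NN := by
  rw [MM, NN, Matrix.mul_fin_three]
  ext i j
  fin_cases i <;> fin_cases j <;> simp <;> rw [ht]
  · linear_combination (uu^4*(ss^2+2)/8 + uu^2/4) * hs2 + (uu/2) * hu3 + (1/2) * husum
  · linear_combination (-uu^4*(ss^2+2)/8 + uu^2/4) * hs2 + (-uu/2) * hu3
  · linear_combination (uu^2/2) * hs2
  · linear_combination (-uu^4*(ss^2+2)/8 + uu^2/4) * hs2 + (-uu/2) * hu3
  · linear_combination (uu^4*(ss^2+2)/8 + uu^2/4) * hs2 + (uu/2) * hu3 + (1/2) * husum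

lemma hN2 : NN * NN = NN2 := by
  rw [NN, NN2, Matrix.mul_fin_three]
  ext i j
  fin_cases i <;> fin_cases j <;> simp
  · linear_combination ((uu-2)/4) * hu3 + (1/4) * husum
  · ring
  · linear_combination uu * hu3
  · ring
  · linear_combination ((uu-2)/4) * hu3 + (1/4) * husum

lemma hN3 : NN2 * NN = 1 := by
  rw [NN, NN2, Matrix.mul_fin_three]
  ext i j
  fin_cases i <;> fin_cases j <;> simp [Matrix.one_apply]
  · linear_combination ((2-uu)/4) * hu3 + (-(1:ℂ)/4) * husum
  · ring
  · linear_combination hu3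
  · ring
  · linear_combination ((2-uu)/4) * hu3 + (-(1:ℂ)/4) * husum

lemma hM6 : MM ^ 6 = 1 := by
  have h2 : MM ^ 2 = NN := by rw [pow_two, hM2]
  calc MM ^ 6 = (MM ^ 2) ^ 3 := by rw [← pow_mul]
    _ = NN ^ 2 * NN := by rw [h2, pow_succ]
    _ = 1 := by rw [pow_two, hN2, hN3]

lemma hM3entry : (MM ^ 3) 1 1 = 0 := by
  have h : MM ^ 3 = NN * MM := by rw [pow_succ, pow_two, hM2]
  rw [h, NN, MM, Matrix.mul_fin_three]
  simp

lemma pow18 (k : ℕ) : (zz ^ k) ^ 18 = 1 := by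
  rw [← pow_mul, mul_comm, pow_mul, hz18, one_pow]

lemma hG1_18 : G₁ ^ 18 = 1 := by
  rw [hG1, Matrix.diagonal_pow]
  ext i j
  fin_cases i <;> fin_cases j <;> simp [Matrix.one_apply, pow18]

lemma hG1_6 : G₁ ^ 6 ≠ 1 := by
  intro h
  rw [hG1, Matrix.diagonal_pow] at h
  have h00 := congrFun (congrFun h 0) 0
  simp [Matrix.diagonal_apply, Matrix.one_apply] at h00
  apply hz6ne
  have h42 : zz ^ 6 * (zz ^ 18) ^ 2 = 1 := by rw [← h00]; ring
  rwa [hz18, one_pow, mul_one] at h42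

lemma hG1_9 : G₁ ^ 9 ≠ 1 := by
  intro h
  rw [hG1, Matrix.diagonal_pow] at h
  have h00 := congrFun (congrFun h 0) 0
  simp [Matrix.diagonal_apply, Matrix.one_apply] at h00
  have : zz ^ 9 = 1 := by
    have h63 : zz ^ 9 * (zz ^ 18) ^ 3 = 1 := by rw [← h00]; ring
    rwa [hz18, one_pow, mul_one] at h63
  rw [hz9] at this
  norm_num at this

lemma hG2_18 : G₂ ^ 18 = 1 := by
  rw [hG2, smul_pow, hz18, one_smul, show (18:ℕ) = 6*3 from rfl, pow_mul, hM6, one_pow]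

lemma hG2_6 : G₂ ^ 6 ≠ 1 := by
  intro h
  rw [hG2, smul_pow, hM6] at h
  have h00 := congrFun (congrFun h 0) 0
  simp [Matrix.smul_apply, Matrix.one_apply] at h00
  exact hz6ne h00

lemma hG2_9 : G₂ ^ 9 ≠ 1 := by
  intro h
  rw [hG2, smul_pow] at h
  have hM9 : MM ^ 9 = MM ^ 3 := by
    rw [show (9:ℕ) = 6 + 3 from rfl, pow_add, hM6, one_mul]
  rw [hM9] at h
  have h11 := congrFun (congrFun h 1) 1
  simp [Matrix.smul_apply, Matrix.one_apply, hM3entry] at h11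

lemma key {G : Matrix (Fin 3) (Fin 3) ℂ} (h18 : G ^ 18 = 1) (h6 : G ^ 6 ≠ 1) (h9 : G ^ 9 ≠ 1)
    {n : ℕ} (hn : 0 < n) (hlt : n < 18) : G ^ n ≠ 1 := by
  intro hGn
  have hd18 : orderOf G ∣ 18 := orderOf_dvd_of_pow_eq_one h18
  have hdn : orderOf G ∣ n := orderOf_dvd_of_pow_eq_one hGn
  have hdne : orderOf G ≠ 0 := by
    intro h0; rw [h0] at hdn; have := Nat.zero_dvd.mp hdn; omega
  have hle : orderOf G ≤ n := Nat.le_of_dvd hn hdn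
  have h1 : 1 ≤ orderOf G := Nat.one_le_iff_ne_zero.mpr hdne
  have h17 : orderOf G ≤ 17 := le_trans hle (Nat.lt_succ_iff.mp (by omega))
  have hcases : orderOf G ∣ 6 ∨ orderOf G ∣ 9 := by
    interval_cases h : orderOf G <;> revert hd18 <;> decide
  rcases hcases with h | h
  · exact h6 (orderOf_dvd_iff_pow_eq_one.mp h)
  · exact h9 (orderOf_dvd_iff_pow_eq_one.mp h)

theorem stmt1 :
    G₁ ^ 18 = 1 ∧ G₂ ^ 18 = 1 ∧
    (∀ n : ℕ, 0 < n → n < 18 → G₁ ^ n ≠ 1) ∧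
    (∀ n : ℕ, 0 < n → n < 18 → G₂ ^ n ≠ 1) := by
  exact ⟨hG1_18, hG2_18,
    fun n hn hlt => key hG1_18 hG1_6 hG1_9 hn hlt,
    fun n hn hlt => key hG2_18 hG2_6 hG2_9 hn hlt⟩
end

section
/- The matrix G₂ is unitarily similar to the diagonal matrix diag(e^{7iπ/9}, −e^{4iπ/9}, e^{−2iπ/9}); that is, there exists a unitary 3×3 complex matrix U such that U·G₂·U* = diag(e^{7iπ/9}, −e^{4iπ/9}, e^{−2iπ/9}). In particular G₂ has the same eigenvalues as G₁. -/
open Complex Matrix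

noncomputable def sc : ℂ := (Real.sqrt 2 : ℂ) / 2

noncomputable def wc : ℂ := Complex.exp (2 * (Real.pi : ℂ) * Complex.I / 3)

noncomputable def e9 : ℂ := Complex.exp ((Real.pi : ℂ) * Complex.I / 9)

lemma hs2_s2 : sc ^ 2 = 1 / 2 := by
  have h : (Real.sqrt 2 : ℂ) ^ 2 = 2 := by
    rw [← Complex.ofReal_pow, Real.sq_sqrt (by norm_num)]
    norm_num
  rw [sc, div_pow, h]
  norm_num

lemma hw3 : wc ^ 3 = 1 := by
  rw [wc, show (3 : ℕ) = 2 + 1 from rfl, pow_succ, sq, ← Complex.exp_add, ← Complex.exp_add,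
    show (2 * (Real.pi : ℂ) * Complex.I / 3 + 2 * (Real.pi : ℂ) * Complex.I / 3 +
      2 * (Real.pi : ℂ) * Complex.I / 3) = 2 * (Real.pi : ℂ) * Complex.I by ring,
    Complex.exp_two_pi_mul_I]

lemma ht_s2 : t = sc * wc := rfl

lemma star_sc : (starRingEnd ℂ) sc = sc := by
  simp [sc, ← Complex.ofReal_ofNat, ← Complex.ofReal_div]

lemma star_wc : (starRingEnd ℂ) wc = wc ^ 2 := by
  have h1 : (starRingEnd ℂ) wc = Complex.exp (-(2 * (Real.pi : ℂ) * Complex.I / 3)) := by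
    rw [wc, ← Complex.exp_conj]
    congr 1
    simp only [map_div₀, _root_.map_mul, Complex.conj_I, Complex.conj_ofReal, map_ofNat]
    ring
  have h2 : wc ^ 2 = Complex.exp (-(2 * (Real.pi : ℂ) * Complex.I / 3)) := by
    rw [wc, sq, ← Complex.exp_add,
      show (2 * (Real.pi : ℂ) * Complex.I / 3 + 2 * (Real.pi : ℂ) * Complex.I / 3) =
        -(2 * (Real.pi : ℂ) * Complex.I / 3) + 2 * (Real.pi : ℂ) * Complex.I by ring,
      Complex.exp_add, Complex.exp_two_pi_mul_I, mul_one]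
  rw [h1, h2]

lemma hd1 : Complex.exp (7 * (Real.pi : ℂ) * Complex.I / 9) = e9 * wc := by
  rw [e9, wc, ← Complex.exp_add]
  congr 1
  ring

lemma hd2 : -Complex.exp (4 * (Real.pi : ℂ) * Complex.I / 9) = e9 * wc ^ 2 := by
  have h : e9 * wc ^ 2 =
      Complex.exp (4 * (Real.pi : ℂ) * Complex.I / 9 + Real.pi * Complex.I) := by
    rw [e9, wc, sq, ← Complex.exp_add, ← Complex.exp_add]
    congr 1
    ring
  rw [h, Complex.exp_add, Complex.exp_pi_mul_I]
  ring

lemma hd3 : Complex.exp (-(2 * (Real.pi : ℂ) * Complex.I) / 9) = e9 * (-wc) := by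
  have h : e9 * wc =
      Complex.exp (-(2 * (Real.pi : ℂ) * Complex.I) / 9 + Real.pi * Complex.I) := by
    rw [e9, wc, ← Complex.exp_add]
    congr 1
    ring
  rw [Complex.exp_add, Complex.exp_pi_mul_I] at h
  linear_combination h

noncomputable def Umat : Matrix (Fin 3) (Fin 3) ℂ :=
  !![1/2, sc, 1/2; sc, 0, -sc; 1/2, -sc, 1/2]

lemma hUH : Umatᴴ = Umat := by
  have h := star_sc
  ext i j
  fin_cases i <;> fin_cases j <;>
    simp [Umat, Matrix.conjTranspose_apply, h]

lemma hUU : Umat * Umat = 1 := by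
  have h2 := hs2_s2
  rw [Umat, Matrix.mul_fin_three, Matrix.one_fin_three]
  ext i j
  fin_cases i <;> fin_cases j <;>
    (try simp [Matrix.vecHead, Matrix.vecTail]) <;>
    first
      | ring1
      | linear_combination h2
      | linear_combination 2 * h2
      | linear_combination -h2
      | linear_combination -2 * h2
      | linear_combination 3 * h2
      | linear_combination -3 * h2

lemma diag3 (a b c : ℂ) : Matrix.diagonal ![a, b, c] = !![a,0,0; 0,b,0; 0,0,c] := by
  ext i j
  fin_cases i <;> fin_cases j <;> simp [Matrix.diagonal, Matrix.vecHead, Matrix.vecTail]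

open Polynomial in
lemma charpoly_conj (U A : Matrix (Fin 3) (Fin 3) ℂ) (hU : U * U = 1) :
    (U * A * U).charpoly = A.charpoly := by
  have hmap : (C : ℂ →+* ℂ[X]).mapMatrix U * (C : ℂ →+* ℂ[X]).mapMatrix U = 1 := by
    rw [← _root_.map_mul, hU, _root_.map_one]
  have hcomm := Matrix.scalar_commute (n := Fin 3) (X : ℂ[X])
    (fun r' => Commute.all _ _) ((C : ℂ →+* ℂ[X]).mapMatrix U)
  have key : charmatrix (U * A * U) =
      (C : ℂ →+* ℂ[X]).mapMatrix U * charmatrix A * (C : ℂ →+* ℂ[X]).mapMatrix U := by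
    unfold charmatrix
    rw [mul_sub, sub_mul, _root_.map_mul, _root_.map_mul]
    congr 1
    rw [← hcomm.eq, mul_assoc, hmap, mul_one]
  unfold Matrix.charpoly
  rw [key, Matrix.det_mul, Matrix.det_mul]
  have hdet : ((C : ℂ →+* ℂ[X]).mapMatrix U).det * ((C : ℂ →+* ℂ[X]).mapMatrix U).det = 1 := by
    rw [← Matrix.det_mul, hmap, Matrix.det_one]
  linear_combination (charmatrix A).det * hdet

lemma hM : Umat * !![t ^ 2, t, -t ^ 2; t, 0, t; -t ^ 2, t, t ^ 2] * Umat
    = !![wc, 0, 0; 0, wc ^ 2, 0; 0, 0, -wc] := by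
  have h2 := hs2_s2
  rw [Umat, ht_s2, Matrix.mul_fin_three, Matrix.mul_fin_three]
  ext i j
  fin_cases i <;> fin_cases j <;>
    (try simp [Matrix.vecHead, Matrix.vecTail]) <;>
    first
      | ring1
      | linear_combination ((2:ℂ) * wc) * h2
      | linear_combination ((2:ℂ) * wc ^ 2 + (4:ℂ) * sc ^ 2 * wc ^ 2) * h2
      | linear_combination ((-2:ℂ) * wc) * h2

lemma hG1_s2 : G₁ = Matrix.diagonal
    ![Complex.exp (7 * (Real.pi : ℂ) * Complex.I / 9),
      -Complex.exp (4 * (Real.pi : ℂ) * Complex.I / 9),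
      Complex.exp (-(2 * (Real.pi : ℂ) * Complex.I) / 9)] := by
  have h2 := hs2_s2
  have h3 := hw3
  rw [G₁, ← Matrix.diagonal_smul]
  rw [Matrix.diagonal_eq_diagonal_iff]
  intro i
  fin_cases i <;>
    simp only [Pi.smul_apply, Matrix.cons_val_zero, Matrix.cons_val_one, Matrix.head_cons,
      Matrix.cons_val_two, smul_eq_mul] <;>
    (try simp [Matrix.vecHead, Matrix.vecTail, ht_s2, _root_.map_mul, star_sc, star_wc]) <;>
    (try rw [show Complex.exp ((Real.pi : ℂ) * Complex.I / 9) = e9 from rfl]) <;>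
    first
      | linear_combination (2 * e9 * wc ^ 4) * h2 + (e9 * wc) * h3 - hd1
      | linear_combination (2 * e9 * wc ^ 2) * h2 - hd2
      | linear_combination (-(2 * e9 * wc ^ 4)) * h2 - (e9 * wc) * h3 - hd3

theorem stmt2 :
    (∃ U : Matrix (Fin 3) (Fin 3) ℂ, U ∈ Matrix.unitaryGroup (Fin 3) ℂ ∧
      U * G₂ * Uᴴ = Matrix.diagonal
        ![Complex.exp (7 * (Real.pi : ℂ) * Complex.I / 9),
          -Complex.exp (4 * (Real.pi : ℂ) * Complex.I / 9),
          Complex.exp (-(2 * (Real.pi : ℂ) * Complex.I) / 9)]) ∧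
    G₂.charpoly = G₁.charpoly := by
  have hG2e : G₂ = e9 • !![t ^ 2, t, -t ^ 2; t, 0, t; -t ^ 2, t, t ^ 2] := rfl
  have hDe : Matrix.diagonal
      ![Complex.exp (7 * (Real.pi : ℂ) * Complex.I / 9),
        -Complex.exp (4 * (Real.pi : ℂ) * Complex.I / 9),
        Complex.exp (-(2 * (Real.pi : ℂ) * Complex.I) / 9)]
      = e9 • !![wc, 0, 0; 0, wc ^ 2, 0; 0, 0, -wc] := by
    rw [← diag3, ← Matrix.diagonal_smul, Matrix.diagonal_eq_diagonal_iff]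
    intro i
    fin_cases i <;>
      (try simp [Matrix.vecHead, Matrix.vecTail]) <;>
      first
        | exact hd1
        | exact hd2
        | exact hd3
        | linear_combination hd1
        | linear_combination hd2
        | linear_combination hd3
  have hmain : Umat * G₂ * Umatᴴ = Matrix.diagonal
      ![Complex.exp (7 * (Real.pi : ℂ) * Complex.I / 9),
        -Complex.exp (4 * (Real.pi : ℂ) * Complex.I / 9),
        Complex.exp (-(2 * (Real.pi : ℂ) * Complex.I) / 9)] := by
    rw [hUH, hG2e, Matrix.mul_smul, Matrix.smul_mul, hM, hDe]
  refine ⟨⟨Umat, ?_, hmain⟩, ?_⟩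
  · rw [Matrix.mem_unitaryGroup_iff, Matrix.star_eq_conjTranspose, hUH]
    exact hUU
  · have hsim : G₂ = Umat * G₁ * Umat := by
      have h : Umat * (Umat * G₂ * Umatᴴ) * Umat = Umat * G₁ * Umat := by
        rw [hmain, hG1_s2]
      rw [hUH] at h
      calc G₂ = (Umat * Umat) * G₂ * (Umat * Umat) := by rw [hUU]; simp
        _ = Umat * (Umat * G₂ * Umat) * Umat := by noncomm_ring
        _ = Umat * G₁ * Umat := h
    rw [hsim, charpoly_conj _ _ hUU]
end

section
/- The matrices G₁ and G₂ satisfy the braid relation: G₁·G₂·G₁ = G₂·G₁·G₂. -/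
open Complex Matrix

/-! The scalar `e^{iπ/9}` factors out of both triple products as its cube. Since `|t|² = 1/2` and
`t⁶ = 1/8`, we have `2t̄² = 4t⁴`, so both matrices become polynomial in `t`; the two triple
products then differ by `2t⁴(8t⁶ - 1)` in the four corner entries and agree everywhere else. -/

theorem smul_braid {R A : Type*} [Mul R] [Mul A] [SMul R A] [IsScalarTower R A A]
    [IsScalarTower R R A] [SMulCommClass R A A] (c : R) {a b : A} (h : a * b * a = b * a * b) :
    c • a * c • b * c • a = c • b * c • a * c • b := by
  simp only [smul_mul_smul_comm, h]

theorem diagonal_braid_of_eight_mul_pow_six_eq_one {R : Type*} [CommRing R] {t : R}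
    (ht : 8 * t ^ 6 = 1) :
    diagonal ![4 * t ^ 4, 2 * t ^ 2, -(4 * t ^ 4)] * !![t ^ 2, t, -t ^ 2; t, 0, t; -t ^ 2, t, t ^ 2] *
        diagonal ![4 * t ^ 4, 2 * t ^ 2, -(4 * t ^ 4)] =
      !![t ^ 2, t, -t ^ 2; t, 0, t; -t ^ 2, t, t ^ 2] *
        diagonal ![4 * t ^ 4, 2 * t ^ 2, -(4 * t ^ 4)] *
          !![t ^ 2, t, -t ^ 2; t, 0, t; -t ^ 2, t, t ^ 2] := by
  ext i j
  fin_cases i <;> fin_cases j <;> simp [mul_apply, Fin.sum_univ_three, vecMul_diagonal] <;>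
    first | ring1 | linear_combination 2 * t ^ 4 * ht

theorem t_pow_six : t ^ 6 = 1 / 8 := by
  have h : (6 : ℂ) * (2 * Real.pi * I / 3) = (2 : ℕ) * (2 * Real.pi * I) := by push_cast; ring
  have hsqrt : (Real.sqrt 2 : ℂ) ^ 2 = 2 := by norm_cast; exact Real.sq_sqrt zero_le_two
  rw [t, mul_pow, ← exp_nat_mul, Nat.cast_ofNat, h, exp_nat_mul_two_pi_mul_I,
    div_pow, pow_mul _ 2 3, hsqrt]
  norm_num

theorem conj_t_mul_t : starRingEnd ℂ t * t = 1 / 2 := by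
  rw [conj_mul', t, norm_mul, norm_exp]
  norm_num [div_pow, ← ofReal_pow]

theorem two_mul_conj_t_sq : 2 * starRingEnd ℂ t ^ 2 = 4 * t ^ 4 := by
  linear_combination (-16 * starRingEnd ℂ t ^ 2) * t_pow_six +
    16 * t ^ 4 * (starRingEnd ℂ t * t + 1 / 2) * conj_t_mul_t

theorem stmt3 : G₁ * G₂ * G₁ = G₂ * G₁ * G₂ := by
  have hG₁ : G₁ = exp (Real.pi * I / 9) • diagonal ![4 * t ^ 4, 2 * t ^ 2, -(4 * t ^ 4)] := by
    rw [G₁, two_mul_conj_t_sq]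
  rw [hG₁, G₂]
  exact smul_braid _ (diagonal_braid_of_eight_mul_pow_six_eq_one (by rw [t_pow_six]; norm_num))
end

section
/- The squares of G₁ and G₂ commute: G₁²·G₂² = G₂²·G₁². -/
open Complex Matrix

theorem stmt4 : G₁ ^ 2 * G₂ ^ 2 = G₂ ^ 2 * G₁ ^ 2 := by
  ext i j
  fin_cases i <;> fin_cases j <;>
    simp [G₁, G₂, pow_two, Matrix.mul_apply, Fin.sum_univ_succ, Matrix.diagonal] <;> ring
end

section
/- The product G₂·G₁ has order dividing 3: (G₂·G₁)³ = I. Equivalently, (G₁·G₂)³ = I. -/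
open Complex Matrix

lemma diag3_s5 (x y z : ℂ) : Matrix.diagonal ![x, y, z] = !![x,0,0; 0,y,0; 0,0,z] := by
  ext i j
  fin_cases i <;> fin_cases j <;> simp [Matrix.diagonal, Matrix.vecHead, Matrix.vecTail]

lemma cube3 (a b d : ℂ) :
    !![a,b,a; d,0,-d; -a,b,-a] ^ 3 =
    (4*a*b*d) • (1 : Matrix (Fin 3) (Fin 3) ℂ) := by
  rw [pow_succ, pow_succ, pow_one, Matrix.mul_fin_three, Matrix.mul_fin_three, Matrix.one_fin_three]
  ext i j
  fin_cases i <;> fin_cases j <;> simp [Matrix.vecHead, Matrix.vecTail] <;> ring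

lemma cube3' (a b d : ℂ) :
    !![a,d,-a; b,0,b; a,-d,-a] ^ 3 =
    (4*a*b*d) • (1 : Matrix (Fin 3) (Fin 3) ℂ) := by
  rw [pow_succ, pow_succ, pow_one, Matrix.mul_fin_three, Matrix.mul_fin_three, Matrix.one_fin_three]
  ext i j
  fin_cases i <;> fin_cases j <;> simp [Matrix.vecHead, Matrix.vecTail] <;> ring

lemma scalar_key : Complex.exp ((Real.pi : ℂ) * Complex.I / 9) ^ 6 *
    (4 * (2 * t^2 * (starRingEnd ℂ t)^2) * (2 * t^3) * (2 * t * (starRingEnd ℂ t)^2)) = 1 := by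
  have hconj : starRingEnd ℂ t =
      ((Real.sqrt 2 : ℂ) / 2) * Complex.exp (-(2 * (Real.pi : ℂ) * Complex.I / 3)) := by
    rw [t, _root_.map_mul, ← Complex.exp_conj]
    congr 1
    · rw [map_div₀, Complex.conj_ofReal, map_ofNat]
    · congr 1
      simp [map_div₀, Complex.conj_ofReal, Complex.conj_I, map_ofNat]
      ring
  rw [hconj, t]
  have h2 : ((Real.sqrt 2:ℂ)/2)^10 = 1/32 := by
    rw [div_pow, show ((Real.sqrt 2:ℂ))^10 = (((Real.sqrt 2:ℂ))^2)^5 by ring,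
      show ((Real.sqrt 2 : ℂ))^2 = 2 by rw [← Complex.ofReal_pow, Real.sq_sqrt] <;> norm_num]
    norm_num
  have h3 : Complex.exp ((Real.pi : ℂ) * Complex.I / 9) ^ 6 *
      Complex.exp (2 * (Real.pi : ℂ) * Complex.I / 3) ^ 6 *
      Complex.exp (-(2 * (Real.pi : ℂ) * Complex.I / 3)) ^ 4 = 1 := by
    rw [← Complex.exp_nat_mul, ← Complex.exp_nat_mul, ← Complex.exp_nat_mul,
      ← Complex.exp_add, ← Complex.exp_add,
      show ((6:ℕ) * ((Real.pi : ℂ) * Complex.I / 9) + (6:ℕ) * (2 * (Real.pi : ℂ) * Complex.I / 3) +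
        (4:ℕ) * (-(2 * (Real.pi : ℂ) * Complex.I / 3))) = 2 * (Real.pi : ℂ) * Complex.I by
        push_cast; ring]
    exact Complex.exp_two_pi_mul_I
  calc Complex.exp ((Real.pi : ℂ) * Complex.I / 9) ^ 6 *
      (4 * (2 * (((Real.sqrt 2 : ℂ) / 2) * Complex.exp (2 * (Real.pi : ℂ) * Complex.I / 3))^2 *
          (((Real.sqrt 2 : ℂ) / 2) * Complex.exp (-(2 * (Real.pi : ℂ) * Complex.I / 3)))^2) *
        (2 * (((Real.sqrt 2 : ℂ) / 2) * Complex.exp (2 * (Real.pi : ℂ) * Complex.I / 3))^3) *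
        (2 * (((Real.sqrt 2 : ℂ) / 2) * Complex.exp (2 * (Real.pi : ℂ) * Complex.I / 3)) *
          (((Real.sqrt 2 : ℂ) / 2) * Complex.exp (-(2 * (Real.pi : ℂ) * Complex.I / 3)))^2))
      = 32 * ((Real.sqrt 2:ℂ)/2)^10 *
        (Complex.exp ((Real.pi : ℂ) * Complex.I / 9) ^ 6 *
         Complex.exp (2 * (Real.pi : ℂ) * Complex.I / 3) ^ 6 *
         Complex.exp (-(2 * (Real.pi : ℂ) * Complex.I / 3)) ^ 4) := by ring
    _ = 1 := by rw [h2, h3]; norm_num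

theorem stmt5 : (G₂ * G₁) ^ 3 = 1 ∧ (G₁ * G₂) ^ 3 = 1 := by
  set E := Complex.exp ((Real.pi : ℂ) * Complex.I / 9) with hE
  set σ := starRingEnd ℂ t with hσ
  have hMD : !![t ^ 2, t, -t ^ 2; t, 0, t; -t ^ 2, t, t ^ 2] *
      !![2*σ^2,0,0; 0,2*t^2,0; 0,0,-(2*σ^2)] =
      !![2*t^2*σ^2, 2*t^3, 2*t^2*σ^2; 2*t*σ^2, 0, -(2*t*σ^2);
         -(2*t^2*σ^2), 2*t^3, -(2*t^2*σ^2)] := by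
    rw [Matrix.mul_fin_three]
    ext i j
    fin_cases i <;> fin_cases j <;> simp [Matrix.vecHead, Matrix.vecTail] <;> ring
  have hDM : !![2*σ^2,0,0; 0,2*t^2,0; 0,0,-(2*σ^2)] *
      !![t ^ 2, t, -t ^ 2; t, 0, t; -t ^ 2, t, t ^ 2] =
      !![2*t^2*σ^2, 2*t*σ^2, -(2*t^2*σ^2); 2*t^3, 0, 2*t^3;
         2*t^2*σ^2, -(2*t*σ^2), -(2*t^2*σ^2)] := by
    rw [Matrix.mul_fin_three]
    ext i j
    fin_cases i <;> fin_cases j <;> simp [Matrix.vecHead, Matrix.vecTail] <;> ring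
  have h1 : G₂ * G₁ = (E * E) • (!![2*t^2*σ^2, 2*t^3, 2*t^2*σ^2; 2*t*σ^2, 0, -(2*t*σ^2);
      -(2*t^2*σ^2), 2*t^3, -(2*t^2*σ^2)]) := by
    rw [G₁, G₂, ← hE, ← hσ, diag3_s5, smul_mul_assoc, mul_smul_comm, smul_smul, hMD]
  have h2 : G₁ * G₂ = (E * E) • (!![2*t^2*σ^2, 2*t*σ^2, -(2*t^2*σ^2); 2*t^3, 0, 2*t^3;
      2*t^2*σ^2, -(2*t*σ^2), -(2*t^2*σ^2)]) := by
    rw [G₁, G₂, ← hE, ← hσ, diag3_s5, smul_mul_assoc, mul_smul_comm, smul_smul, hDM]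
  have hsc : (E * E) ^ 3 * (4 * (2*t^2*σ^2) * (2*t^3) * (2*t*σ^2)) = 1 := by
    have := scalar_key
    rw [← hE, ← hσ] at this
    calc (E * E) ^ 3 * (4 * (2*t^2*σ^2) * (2*t^3) * (2*t*σ^2))
        = E ^ 6 * (4 * (2 * t^2 * σ^2) * (2 * t^3) * (2 * t * σ^2)) := by ring
      _ = 1 := this
  constructor
  · rw [h1, smul_pow, cube3, smul_smul, hsc, one_smul]
  · rw [h2, smul_pow, cube3', smul_smul, hsc, one_smul]
end

section
/- The matrix G₂²·G₁ is an involution: (G₂²·G₁)² = I. -/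
open Complex Matrix

lemma diag_explicit (x y z : ℂ) :
    Matrix.diagonal ![x, y, z] = !![x, 0, 0; 0, y, 0; 0, 0, z] := by
  ext i j
  fin_cases i <;> fin_cases j <;> simp [Matrix.diagonal_apply] <;> rfl

set_option maxHeartbeats 1000000 in
lemma key_aux (s a : ℂ) (hs : s ^ 2 = 2) (ha : a ^ 9 = -1) :
    ((a • !![(s/2*a^6) ^ 2, s/2*a^6, -(s/2*a^6) ^ 2; s/2*a^6, 0, s/2*a^6;
        -(s/2*a^6) ^ 2, s/2*a^6, (s/2*a^6) ^ 2] : Matrix (Fin 3) (Fin 3) ℂ) ^ 2 *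
      (a • !![2 * (s/2*a^12) ^ 2, 0, 0; 0, 2 * (s/2*a^6) ^ 2, 0; 0, 0,
        -(2 * (s/2*a^12) ^ 2)])) ^ 2 = 1 := by
  rw [pow_two, pow_two]
  ext i j
  fin_cases i <;> fin_cases j <;>
      simp [Matrix.mul_apply, Matrix.one_apply, Fin.sum_univ_three, Matrix.smul_apply]
  all_goals
    first
    | ring1
    | linear_combination ((1/2)*a^90 + (1/4)*s^2*a^90 + (1/8)*s^4*a^90 + (1/16)*s^6*a^90 + (1/32)*s^8*a^90) * hs + (-1 + a^9 + -1*a^18 + a^27 + -1*a^36 + a^45 + -1*a^54 + a^63 + -1*a^72 + a^81) * ha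
    | linear_combination ((1/2)*a^54 + (1/4)*s^2*a^54 + (1/8)*s^4*a^54 + (1/16)*s^6*a^54) * hs + (-1 + a^9 + -1*a^18 + a^27 + -1*a^36 + a^45) * ha
    | linear_combination (-((1/2)*a^90 + (1/4)*s^2*a^90 + (1/8)*s^4*a^90 + (1/16)*s^6*a^90 + (1/32)*s^8*a^90)) * hs + (-(-1 + a^9 + -1*a^18 + a^27 + -1*a^36 + a^45 + -1*a^54 + a^63 + -1*a^72 + a^81)) * ha
    | linear_combination (-((1/2)*a^54 + (1/4)*s^2*a^54 + (1/8)*s^4*a^54 + (1/16)*s^6*a^54)) * hs + (-(-1 + a^9 + -1*a^18 + a^27 + -1*a^36 + a^45)) * ha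
    | linear_combination (((1/2)*a^90 + (1/4)*s^2*a^90 + (1/8)*s^4*a^90 + (1/16)*s^6*a^90 + (1/32)*s^8*a^90) - ((1/2)*a^54 + (1/4)*s^2*a^54 + (1/8)*s^4*a^54 + (1/16)*s^6*a^54)) * hs + ((-1 + a^9 + -1*a^18 + a^27 + -1*a^36 + a^45 + -1*a^54 + a^63 + -1*a^72 + a^81) - (-1 + a^9 + -1*a^18 + a^27 + -1*a^36 + a^45)) * ha
    | linear_combination (((1/2)*a^54 + (1/4)*s^2*a^54 + (1/8)*s^4*a^54 + (1/16)*s^6*a^54) - ((1/2)*a^90 + (1/4)*s^2*a^90 + (1/8)*s^4*a^90 + (1/16)*s^6*a^90 + (1/32)*s^8*a^90)) * hs + ((-1 + a^9 + -1*a^18 + a^27 + -1*a^36 + a^45) - (-1 + a^9 + -1*a^18 + a^27 + -1*a^36 + a^45 + -1*a^54 + a^63 + -1*a^72 + a^81)) * ha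

theorem stmt6 : (G₂ ^ 2 * G₁) ^ 2 = 1 := by
  set s : ℂ := (Real.sqrt 2 : ℂ) with hs_def
  set a : ℂ := Complex.exp ((Real.pi : ℂ) * Complex.I / 9) with ha_def
  have hs : s ^ 2 = 2 := by
    rw [hs_def]
    norm_cast
    exact Real.sq_sqrt (by norm_num)
  have ha : a ^ 9 = -1 := by
    rw [ha_def, ← Complex.exp_nat_mul]
    rw [show ((9 : ℕ) : ℂ) * ((Real.pi : ℂ) * Complex.I / 9) = (Real.pi : ℂ) * Complex.I by
      push_cast; ring]
    exact Complex.exp_pi_mul_I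
  have ha6 : Complex.exp (2 * (Real.pi : ℂ) * Complex.I / 3) = a ^ 6 := by
    rw [ha_def, ← Complex.exp_nat_mul]
    congr 1
    push_cast; ring
  have ht : t = s / 2 * a ^ 6 := by
    rw [t, ha6, hs_def]
  have h12 : a ^ 12 = Complex.exp (-(2 * (Real.pi : ℂ) * Complex.I / 3)) := by
    rw [ha_def, ← Complex.exp_nat_mul,
      show -(2 * (Real.pi : ℂ) * Complex.I / 3) =
        ((12 : ℕ) : ℂ) * ((Real.pi : ℂ) * Complex.I / 9) - 2 * (Real.pi : ℂ) * Complex.I by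
        push_cast; ring,
      Complex.exp_sub, Complex.exp_two_pi_mul_I, div_one]
  have hc : (starRingEnd ℂ) (2 * (Real.pi : ℂ) * Complex.I / 3) =
      -(2 * (Real.pi : ℂ) * Complex.I / 3) := by
    rw [show (2 * (Real.pi : ℂ) * Complex.I / 3) = ((2 * Real.pi / 3 : ℝ) : ℂ) * Complex.I by
      push_cast; ring, _root_.map_mul, Complex.conj_ofReal, Complex.conj_I]
    push_cast; ring
  have htb : starRingEnd ℂ t = s / 2 * a ^ 12 := by
    rw [t, _root_.map_mul, map_div₀, ← Complex.exp_conj, hc, ← h12, Complex.conj_ofReal,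
      ← hs_def, show (starRingEnd ℂ) (2 : ℂ) = 2 from map_ofNat _ 2]
  have key := key_aux s a hs ha
  rw [G₁, G₂, htb, ht, diag_explicit, ← ha_def]
  convert key using 3 <;> ring
end

section
/- The matrices A := G₁·G₂²·G₁⁻¹ and B := G₁·G₂⁻²·G₁ commute: A·B = B·A. -/
open Complex Matrix

lemma key_s9 : G₁ * G₁ * (G₂ * G₂) = G₂ * G₂ * (G₁ * G₁) := by
  ext i j
  fin_cases i <;> fin_cases j <;>
    simp [G₁, G₂, Matrix.mul_apply, Fin.sum_univ_three, Matrix.diagonal, Matrix.smul_apply] <;>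
    ring

theorem stmt9 (g₁ g₂ : GL (Fin 3) ℂ)
    (hg₁ : (g₁ : Matrix (Fin 3) (Fin 3) ℂ) = G₁)
    (hg₂ : (g₂ : Matrix (Fin 3) (Fin 3) ℂ) = G₂) :
    (g₁ * g₂ ^ 2 * g₁⁻¹) * (g₁ * g₂⁻¹ ^ 2 * g₁) =
      (g₁ * g₂⁻¹ ^ 2 * g₁) * (g₁ * g₂ ^ 2 * g₁⁻¹) := by
  have h : (g₁ * g₁) * (g₂ * g₂) = (g₂ * g₂) * (g₁ * g₁) := by
    apply Units.ext
    simpa [Units.val_mul, hg₁, hg₂] using key_s9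
  have lhs : (g₁ * g₂ ^ 2 * g₁⁻¹) * (g₁ * g₂⁻¹ ^ 2 * g₁) = g₁ * g₁ := by
    group
  have rhs : (g₁ * g₂⁻¹ ^ 2 * g₁) * (g₁ * g₂ ^ 2 * g₁⁻¹) = g₁ * g₁ := by
    have h' : (g₁ * g₁) * g₂ ^ 2 = g₂ ^ 2 * (g₁ * g₁) := by
      rw [pow_two]; exact h
    have e : (g₁ * g₂⁻¹ ^ 2 * g₁) * (g₁ * g₂ ^ 2 * g₁⁻¹)
        = g₁ * (g₂ ^ 2)⁻¹ * ((g₁ * g₁) * g₂ ^ 2) * g₁⁻¹ := by group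
    rw [e, h']
    group
  rw [lhs, rhs]
end

section
/- The cyclic subgroups generated by A and by B intersect trivially: ⟨A⟩ ∩ ⟨B⟩ = {I}, where A := G₁·G₂²·G₁⁻¹ and B := G₁·G₂⁻²·G₁. -/
open Complex Matrix

/-!
Write `ζ = e^{iπ/9}`, a primitive 18th root of unity, and `ω = ζ⁶`. Then `G₁ = ζ⁷ • normG₁ ω`
and `G₂ = ζ⁷ • normG₂ ω √2`, where `normG₂ ω √2 ^ 2 = stretch (ω ^ 2)` and `stretch` is
multiplicative. Hence `g₂⁶` is the scalar `ζ⁴²`, central of order 3, so `A³ = g₂⁶` and `A` has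
order 9; and `B * g₂⁶ = g₁ * g₂⁴ * g₁` gives `B = normG₁ ω * stretch ω * normG₁ ω`, a non-scalar
matrix of order 3. An element of `⟨A⟩ ⊓ ⟨B⟩` is killed by 3, hence is a power of the central
element `A³`; but `⟨B⟩` has prime order and `B` is not central, so it meets the centre trivially.
-/

open Subgroup

section GroupTheory

variable {G : Type*} [Group G]

theorem zpowers_inf_zpowers_le_zpowers_pow {a b : G} {k n : ℕ} (hn : n ≠ 0)
    (ha : orderOf a = k * n) (hb : b ^ n = 1) :
    zpowers a ⊓ zpowers b ≤ zpowers (a ^ k) := by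
  rintro _ ⟨⟨m, rfl⟩, hx⟩
  have hxn : (a ^ m) ^ n = 1 := orderOf_dvd_iff_pow_eq_one.mp
    ((orderOf_dvd_of_mem_zpowers hx).trans (orderOf_dvd_of_pow_eq_one hb))
  have hdvd : ((k * n : ℕ) : ℤ) ∣ m * n := by
    rw [← ha, orderOf_dvd_iff_zpow_eq_one, _root_.zpow_mul, zpow_natCast, hxn]
  obtain ⟨j, rfl⟩ : (k : ℤ) ∣ m :=
    Int.dvd_of_mul_dvd_mul_right (Int.natCast_ne_zero.mpr hn) (by exact_mod_cast hdvd)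
  exact ⟨j, by simp only [_root_.zpow_mul, zpow_natCast]⟩

theorem zpowers_inf_eq_bot_of_orderOf_prime {b : G} {H : Subgroup G}
    (hb : (orderOf b).Prime) (hbH : b ∉ H) : zpowers b ⊓ H = ⊥ := by
  refine eq_bot_iff.mpr fun x ⟨hxb, hxH⟩ => mem_bot.mpr (by_contra fun hx1 => hbH ?_)
  have : Finite (zpowers b) := (finite_zpowers.mpr (orderOf_pos_iff.mp hb.pos)).to_subtype
  have hord : orderOf x = orderOf b :=
    (hb.eq_one_or_self_of_dvd _ (orderOf_dvd_of_mem_zpowers hxb)).resolve_left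
      (by rwa [orderOf_eq_one_iff])
  have hzx : zpowers x = zpowers b :=
    eq_of_le_of_card_ge (zpowers_le.mpr hxb) (by rw [Nat.card_zpowers, Nat.card_zpowers, hord])
  exact zpowers_le.mpr hxH (hzx ▸ mem_zpowers b)

theorem zpowers_inf_zpowers_eq_bot {p : ℕ} (hp : p.Prime) {a b : G}
    (ha : orderOf a = p * p) (hap : a ^ p ∈ center G) (hb : orderOf b = p)
    (hbc : b ∉ center G) : zpowers a ⊓ zpowers b = ⊥ := by
  refine eq_bot_iff.mpr ?_
  calc zpowers a ⊓ zpowers b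
      ≤ zpowers (a ^ p) ⊓ zpowers b :=
        le_inf (zpowers_inf_zpowers_le_zpowers_pow hp.ne_zero ha (hb ▸ pow_orderOf_eq_one b))
          inf_le_right
    _ ≤ center G ⊓ zpowers b := inf_le_inf_right _ (zpowers_le.mpr hap)
    _ = ⊥ := by rw [inf_comm, zpowers_inf_eq_bot_of_orderOf_prime (hb ▸ hp) hbc]

end GroupTheory

namespace Matrix.GeneralLinearGroup

variable {n R : Type*} [Fintype n] [DecidableEq n] [CommRing R]

theorem mem_center_of_val_eq_smul_one {g : GL n R} {a : R} (h : (g : Matrix n n R) = a • 1) :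
    g ∈ center (GL n R) :=
  mem_center_iff_val_mem_range_scalar.mpr ⟨a, by rw [h, smul_one_eq_diagonal]; rfl⟩

theorem notMem_center_of_val_apply_ne_zero {g : GL n R} {i j : n} (hij : i ≠ j)
    (h : (g : Matrix n n R) i j ≠ 0) : g ∉ center (GL n R) := fun hg => by
  obtain ⟨a, ha⟩ := mem_center_iff_val_mem_range_scalar.mp hg
  exact h (by rw [← ha, scalar_apply, diagonal_apply_ne _ hij])

end Matrix.GeneralLinearGroup

open Matrix.GeneralLinearGroup

/-- `stretch l` multiplies `e₀ - e₂` by `l` and fixes `e₀ + e₂` and `e₁`. -/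
noncomputable def stretch : ℂ →* Matrix (Fin 3) (Fin 3) ℂ where
  toFun l := !![(1 + l) / 2, 0, (1 - l) / 2; 0, 1, 0; (1 - l) / 2, 0, (1 + l) / 2]
  map_one' := by ext i j; fin_cases i <;> fin_cases j <;> norm_num
  map_mul' a b := by
    ext i j
    fin_cases i <;> fin_cases j <;> simp [Matrix.mul_apply, Fin.sum_univ_three] <;> ring

section Normalized

variable (ω r : ℂ)

noncomputable def normG₁ : Matrix (Fin 3) (Fin 3) ℂ := diagonal ![1, ω, -1]

noncomputable def normG₂ : Matrix (Fin 3) (Fin 3) ℂ :=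
  !![ω / 2, r / 2, -(ω / 2); r / 2, 0, r / 2; -(ω / 2), r / 2, ω / 2]

variable {ω r}

theorem normG₂_sq (hr : r ^ 2 = 2) : normG₂ ω r ^ 2 = stretch (ω ^ 2) := by
  ext i j
  fin_cases i <;> fin_cases j <;>
    simp [sq, normG₂, stretch, Matrix.mul_apply, Fin.sum_univ_three] <;> grind

theorem normG₂_pow_six (hr : r ^ 2 = 2) (hω : ω ^ 3 = 1) : normG₂ ω r ^ 6 = 1 := by
  rw [pow_mul (normG₂ ω r) 2 3, normG₂_sq hr, ← map_pow, ← pow_mul, pow_mul' ω 2 3, hω,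
    one_pow, map_one]

theorem normG₂_pow_four (hr : r ^ 2 = 2) (hω : ω ^ 3 = 1) : normG₂ ω r ^ 4 = stretch ω := by
  rw [pow_mul (normG₂ ω r) 2 2, normG₂_sq hr, ← map_pow, ← pow_mul, pow_succ' ω 3, hω, mul_one]

theorem normG₁_stretch_normG₁_pow_three (hω : ω ^ 3 = 1) :
    (normG₁ ω * stretch ω * normG₁ ω) ^ 3 = 1 := by
  ext i j
  fin_cases i <;> fin_cases j <;>
    simp [pow_succ, normG₁, stretch, Matrix.mul_apply, Fin.sum_univ_three, one_apply] <;> grind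

theorem normG₁_stretch_normG₁_apply_zero_two :
    (normG₁ ω * stretch ω * normG₁ ω) 0 2 = (ω - 1) / 2 := by
  simp [normG₁, stretch, Matrix.mul_apply, Fin.sum_univ_three]
  ring

end Normalized

local notation "ζ" => Complex.exp ((Real.pi : ℂ) * Complex.I / 9)

theorem isPrimitiveRoot_exp_pi_mul_I_div_nine : IsPrimitiveRoot ζ 18 := by
  convert isPrimitiveRoot_exp 18 (by norm_num) using 2
  push_cast
  ring

theorem exp_pi_mul_I_div_nine_pow_eq_one_iff (k : ℕ) : ζ ^ k = 1 ↔ 18 ∣ k :=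
  isPrimitiveRoot_exp_pi_mul_I_div_nine.pow_eq_one_iff_dvd k

theorem exp_pi_mul_I_div_nine_pow_six_pow_three : (ζ ^ 6) ^ 3 = 1 := by
  rw [← pow_mul]
  exact isPrimitiveRoot_exp_pi_mul_I_div_nine.pow_eq_one

theorem conj_exp_pi_mul_I_div_nine : starRingEnd ℂ ζ = ζ ^ 17 := by
  rw [← Complex.exp_conj, map_div₀, map_mul, conj_ofReal, conj_I, map_ofNat, mul_neg, neg_div,
    Complex.exp_neg]
  refine inv_eq_of_mul_eq_one_right ?_
  rw [← pow_succ', isPrimitiveRoot_exp_pi_mul_I_div_nine.pow_eq_one]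

theorem sqrt_two_sq : (Real.sqrt 2 : ℂ) ^ 2 = 2 := by
  rw [← ofReal_pow, Real.sq_sqrt zero_le_two, ofReal_ofNat]

theorem t_eq : t = Real.sqrt 2 / 2 * ζ ^ 6 := by
  rw [t, ← Complex.exp_nat_mul]
  congr 2
  push_cast
  ring

theorem t_sq : t ^ 2 = ζ ^ 12 / 2 := by
  rw [t_eq]
  linear_combination (ζ ^ 12 / 4) * sqrt_two_sq

theorem conj_t_sq : starRingEnd ℂ t ^ 2 = ζ ^ 6 / 2 := by
  calc starRingEnd ℂ t ^ 2 = (Real.sqrt 2 : ℂ) ^ 2 / 4 * ζ ^ 6 * (ζ ^ 18) ^ 11 := by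
        rw [t_eq, map_mul, map_pow, conj_exp_pi_mul_I_div_nine, map_div₀, conj_ofReal, map_ofNat]
        ring
    _ = ζ ^ 6 / 2 := by
        rw [sqrt_two_sq, isPrimitiveRoot_exp_pi_mul_I_div_nine.pow_eq_one]
        ring

theorem G₁_eq : G₁ = ζ ^ 7 • normG₁ (ζ ^ 6) := by
  ext i j
  fin_cases i <;> fin_cases j <;> simp [G₁, normG₁, conj_t_sq, t_sq] <;> ring

theorem G₂_eq : G₂ = ζ ^ 7 • normG₂ (ζ ^ 6) (Real.sqrt 2) := by
  rw [G₂, t_sq, t_eq]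
  ext i j
  fin_cases i <;> fin_cases j <;> simp [normG₂] <;> ring

theorem G₂_pow_six : G₂ ^ 6 = ζ ^ 42 • (1 : Matrix (Fin 3) (Fin 3) ℂ) := by
  rw [G₂_eq, smul_pow, normG₂_pow_six sqrt_two_sq exp_pi_mul_I_div_nine_pow_six_pow_three,
    ← pow_mul]

theorem G₁_mul_G₂_pow_four_mul_G₁ :
    G₁ * G₂ ^ 4 * G₁ = ζ ^ 42 • (normG₁ (ζ ^ 6) * stretch (ζ ^ 6) * normG₁ (ζ ^ 6)) := by
  rw [G₁_eq, G₂_eq, smul_pow,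
    normG₂_pow_four sqrt_two_sq exp_pi_mul_I_div_nine_pow_six_pow_three]
  simp only [Matrix.smul_mul, Matrix.mul_smul, smul_smul, ← pow_mul, ← pow_add]

section Generators

variable {g₁ g₂ : GL (Fin 3) ℂ}

theorem val_pow_six (hg₂ : (g₂ : Matrix (Fin 3) (Fin 3) ℂ) = G₂) :
    ((g₂ ^ 6 : GL (Fin 3) ℂ) : Matrix (Fin 3) (Fin 3) ℂ) = ζ ^ 42 • 1 := by
  rw [Units.val_pow_eq_pow_val, hg₂, G₂_pow_six]

theorem pow_six_mem_center (hg₂ : (g₂ : Matrix (Fin 3) (Fin 3) ℂ) = G₂) :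
    g₂ ^ 6 ∈ center (GL (Fin 3) ℂ) :=
  mem_center_of_val_eq_smul_one (val_pow_six hg₂)

theorem pow_six_ne_one (hg₂ : (g₂ : Matrix (Fin 3) (Fin 3) ℂ) = G₂) : g₂ ^ 6 ≠ 1 := fun h => by
  have h00 := congrArg (fun g : GL (Fin 3) ℂ => (g : Matrix (Fin 3) (Fin 3) ℂ) 0 0) h
  simp only [val_pow_six hg₂, Units.val_one, Matrix.smul_apply, one_apply_eq, smul_eq_mul,
    mul_one] at h00
  exact absurd ((exp_pi_mul_I_div_nine_pow_eq_one_iff 42).mp h00) (by norm_num)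

theorem pow_eighteen_eq_one (hg₂ : (g₂ : Matrix (Fin 3) (Fin 3) ℂ) = G₂) : g₂ ^ 18 = 1 := by
  ext1
  rw [pow_mul g₂ 6 3, Units.val_pow_eq_pow_val, val_pow_six hg₂, smul_pow, one_pow, ← pow_mul,
    (exp_pi_mul_I_div_nine_pow_eq_one_iff _).mpr (by norm_num), one_smul, Units.val_one]

theorem conj_sq_pow_three (hg₂ : (g₂ : Matrix (Fin 3) (Fin 3) ℂ) = G₂) :
    (g₁ * g₂ ^ 2 * g₁⁻¹) ^ 3 = g₂ ^ 6 := by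
  rw [conj_pow, ← pow_mul, mem_center_iff.mp (pow_six_mem_center hg₂) g₁, mul_inv_cancel_right]

theorem orderOf_conj_sq (hg₂ : (g₂ : Matrix (Fin 3) (Fin 3) ℂ) = G₂) :
    orderOf (g₁ * g₂ ^ 2 * g₁⁻¹) = 3 * 3 := by
  refine orderOf_eq_prime_pow (p := 3) (n := 1) ?_ ?_
  · rw [pow_one, conj_sq_pow_three hg₂]
    exact pow_six_ne_one hg₂
  · rw [show 3 ^ (1 + 1) = 3 * 3 from rfl, pow_mul, conj_sq_pow_three hg₂, ← pow_mul]
    exact pow_eighteen_eq_one hg₂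

theorem val_mul_inv_sq_mul (hg₁ : (g₁ : Matrix (Fin 3) (Fin 3) ℂ) = G₁)
    (hg₂ : (g₂ : Matrix (Fin 3) (Fin 3) ℂ) = G₂) :
    ((g₁ * g₂⁻¹ ^ 2 * g₁ : GL (Fin 3) ℂ) : Matrix (Fin 3) (Fin 3) ℂ) =
      normG₁ (ζ ^ 6) * stretch (ζ ^ 6) * normG₁ (ζ ^ 6) := by
  have hmul : g₁ * g₂⁻¹ ^ 2 * g₁ * g₂ ^ 6 = g₁ * g₂ ^ 4 * g₁ := by
    rw [mul_assoc _ g₁, mem_center_iff.mp (pow_six_mem_center hg₂) g₁]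
    group
  apply smul_right_injective _ (pow_ne_zero 42 (exp_ne_zero _))
  calc ζ ^ 42 • ((g₁ * g₂⁻¹ ^ 2 * g₁ : GL (Fin 3) ℂ) : Matrix (Fin 3) (Fin 3) ℂ)
      = ((g₁ * g₂⁻¹ ^ 2 * g₁ : GL (Fin 3) ℂ) : Matrix (Fin 3) (Fin 3) ℂ) * ↑(g₂ ^ 6) := by
        rw [val_pow_six hg₂, Matrix.mul_smul, mul_one]
    _ = ↑(g₁ * g₂ ^ 4 * g₁) := by rw [← Units.val_mul, hmul]
    _ = ζ ^ 42 • (normG₁ (ζ ^ 6) * stretch (ζ ^ 6) * normG₁ (ζ ^ 6)) := by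
        rw [Units.val_mul, Units.val_mul, Units.val_pow_eq_pow_val, hg₁, hg₂,
          G₁_mul_G₂_pow_four_mul_G₁]

theorem mul_inv_sq_mul_notMem_center (hg₁ : (g₁ : Matrix (Fin 3) (Fin 3) ℂ) = G₁)
    (hg₂ : (g₂ : Matrix (Fin 3) (Fin 3) ℂ) = G₂) :
    g₁ * g₂⁻¹ ^ 2 * g₁ ∉ center (GL (Fin 3) ℂ) := by
  refine notMem_center_of_val_apply_ne_zero (i := 0) (j := 2) (by decide) ?_
  rw [val_mul_inv_sq_mul hg₁ hg₂, normG₁_stretch_normG₁_apply_zero_two]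
  have hne : ζ ^ 6 ≠ 1 := mt (exp_pi_mul_I_div_nine_pow_eq_one_iff 6).mp (by norm_num)
  exact div_ne_zero (sub_ne_zero.mpr hne) two_ne_zero

theorem orderOf_mul_inv_sq_mul (hg₁ : (g₁ : Matrix (Fin 3) (Fin 3) ℂ) = G₁)
    (hg₂ : (g₂ : Matrix (Fin 3) (Fin 3) ℂ) = G₂) : orderOf (g₁ * g₂⁻¹ ^ 2 * g₁) = 3 := by
  refine orderOf_eq_prime ?_ fun h => mul_inv_sq_mul_notMem_center hg₁ hg₂ (h ▸ one_mem _)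
  ext1
  rw [Units.val_pow_eq_pow_val, val_mul_inv_sq_mul hg₁ hg₂,
    normG₁_stretch_normG₁_pow_three exp_pi_mul_I_div_nine_pow_six_pow_three, Units.val_one]

end Generators

theorem stmt10 (g₁ g₂ : GL (Fin 3) ℂ)
    (hg₁ : (g₁ : Matrix (Fin 3) (Fin 3) ℂ) = G₁)
    (hg₂ : (g₂ : Matrix (Fin 3) (Fin 3) ℂ) = G₂) :
    Subgroup.zpowers (g₁ * g₂ ^ 2 * g₁⁻¹) ⊓ Subgroup.zpowers (g₁ * g₂⁻¹ ^ 2 * g₁) = ⊥ :=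
  zpowers_inf_zpowers_eq_bot Nat.prime_three (orderOf_conj_sq hg₂)
    (conj_sq_pow_three hg₂ ▸ pow_six_mem_center hg₂) (orderOf_mul_inv_sq_mul hg₁ hg₂)
    (mul_inv_sq_mul_notMem_center hg₁ hg₂)
end

section
/- (Lemma 1) The following two conditions are equivalent: (i) for every integer l, G₁·Aˡ·G₁⁻¹ belongs to the subgroup ⟨A, B⟩ of GL(3,ℂ); (ii) for every pair of integers (k, l), G₁·Aˡ·Bᵏ·G₁⁻¹ belongs to ⟨A, B⟩. Here A := G₁·G₂²·G₁⁻¹ and B := G₁·G₂⁻²·G₁. -/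
open Complex Matrix

theorem stmt14 (g₁ g₂ : GL (Fin 3) ℂ)
    (hg₁ : (g₁ : Matrix (Fin 3) (Fin 3) ℂ) = G₁)
    (hg₂ : (g₂ : Matrix (Fin 3) (Fin 3) ℂ) = G₂) :
    (∀ l : ℤ, g₁ * (g₁ * g₂ ^ 2 * g₁⁻¹) ^ l * g₁⁻¹ ∈
        Subgroup.closure {g₁ * g₂ ^ 2 * g₁⁻¹, g₁ * g₂⁻¹ ^ 2 * g₁}) ↔
    (∀ k l : ℤ, g₁ * (g₁ * g₂ ^ 2 * g₁⁻¹) ^ l * (g₁ * g₂⁻¹ ^ 2 * g₁) ^ k * g₁⁻¹ ∈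
        Subgroup.closure {g₁ * g₂ ^ 2 * g₁⁻¹, g₁ * g₂⁻¹ ^ 2 * g₁}) := by
  set A := g₁ * g₂ ^ 2 * g₁⁻¹ with hA
  set B := g₁ * g₂⁻¹ ^ 2 * g₁ with hB
  set H := Subgroup.closure {A, B} with hH
  have hAH : A ∈ H := Subgroup.subset_closure (Set.mem_insert _ _)
  have hBH : B ∈ H := Subgroup.subset_closure (Set.mem_insert_of_mem _ rfl)
  constructor
  · intro h k l
    -- g₁ * B * g₁⁻¹ = (g₁ * A⁻¹ * g₁⁻¹) * (A * B)
    have hconj : g₁ * B * g₁⁻¹ = (g₁ * A⁻¹ * g₁⁻¹) * (A * B) := by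
      rw [hA, hB]; group
    have hAinv : g₁ * A⁻¹ * g₁⁻¹ ∈ H := by
      have := h (-1)
      simpa [_root_.zpow_neg_one] using this
    have h1 : g₁ * B * g₁⁻¹ ∈ H := by
      rw [hconj]; exact mul_mem hAinv (mul_mem hAH hBH)
    have hBk : g₁ * B ^ k * g₁⁻¹ ∈ H := by
      have heq : g₁ * B ^ k * g₁⁻¹ = (g₁ * B * g₁⁻¹) ^ k := by
        have := map_zpow (MulAut.conj g₁) B k
        simpa [MulAut.conj_apply, mul_assoc] using this
      rw [heq]; exact zpow_mem h1 k
    have hsplit : g₁ * A ^ l * B ^ k * g₁⁻¹ =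
        (g₁ * A ^ l * g₁⁻¹) * (g₁ * B ^ k * g₁⁻¹) := by group
    rw [hsplit]
    exact mul_mem (h l) hBk
  · intro h l
    have := h 0 l
    simpa using this
end
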